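/- Let M be a loopless matroid on a finite ground set E, B a building set for M, and X, Z ∈ B such that {X, Z} ∪ max(B) is nested and X ⊄ Z. Then the rank-1 flats of the contraction M/Z that are contained in (X ∨ Z) ∖ Z are exactly the sets (A ∨ Z) ∖ Z, where A ranges over the rank-1 flats of M with A ⊆ X and A ⊄ Z. -/

import Mathlib

open Set Matroid
open scoped Matroid

variable {α : Type*}

/-- Two sets are incomparable under inclusion. -/
def Incomp (X Y : Set α) : Prop := ¬ X ⊆ Y ∧ ¬ Y ⊆ X

/-- The inclusion-maximal elements of a family of sets. -/
def maxB (B : Set (Set α)) : Set (Set α) := {X ∈ B | ∀ Y ∈ B, X ⊆ Y → X = Y}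

/-- The rank of a set in a matroid: the largest size of an independent subset. -/
noncomputable def mrank (M : Matroid α) (X : Set α) : ℕ :=
  sSup {n : ℕ | ∃ I ⊆ X, M.Indep I ∧ I.ncard = n}

/-- A matroid is loopless if every singleton of the ground set is independent. -/
def MLoopless (M : Matroid α) : Prop := ∀ e ∈ M.E, M.Indep {e}

/-- A matroid is connected if its rank function is not additive over any
separation of the ground set into two nonempty parts. -/
def MConnected (M : Matroid α) : Prop :=
  ∀ A B : Set α, A ∪ B = M.E → Disjoint A B → A.Nonempty → B.Nonempty →
    mrank M A + mrank M B ≠ mrank M M.E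

/-- A building set for a matroid `M`: a set of nonempty flats containing all nonempty
flats whose restriction is connected, and closed under joins of intersecting members. -/
def IsBuildingSet (M : Matroid α) (B : Set (Set α)) : Prop :=
  (∀ X ∈ B, M.IsFlat X ∧ X.Nonempty) ∧
  (∀ X, M.IsFlat X → X.Nonempty → MConnected (M.restrict X) → X ∈ B) ∧
  (∀ X ∈ B, ∀ Y ∈ B, (X ∩ Y).Nonempty → M.closure (X ∪ Y) ∈ B)

/-- A nested set of a building set `B`. -/
def IsNested (M : Matroid α) (B N : Set (Set α)) : Prop :=
  N ⊆ B ∧ maxB B ⊆ N ∧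
  ∀ S : Set (Set α), S ⊆ N → S.Nontrivial → S.Pairwise Incomp →
    M.closure (⋃₀ S) ∉ B

/-- An inclusion-maximal nested set. -/
def IsMaxNested (M : Matroid α) (B N : Set (Set α)) : Prop :=
  IsNested M B N ∧ ∀ N', IsNested M B N' → N ⊆ N' → N' = N

/-- An atom of a matroid: a rank-one flat. -/
def IsAtomFlat (M : Matroid α) (A : Set α) : Prop := M.IsFlat A ∧ mrank M A = 1

/-- Atoms are compared by their least elements. -/
def atomLE [Preorder α] (A A' : Set α) : Prop :=
  ∃ a a', IsLeast A a ∧ IsLeast A' a' ∧ a ≤ a'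

/-- Strict comparison of atoms by their least elements. -/
def atomLT [Preorder α] (A A' : Set α) : Prop :=
  ∃ a a', IsLeast A a ∧ IsLeast A' a' ∧ a < a'

/-- `A` is an admissible label for `X` within the family `S`:
an atom contained in `X` but in no member of `S` properly below `X`. -/
def GoodLabel (M : Matroid α) (S : Set (Set α)) (X A : Set α) : Prop :=
  IsAtomFlat M A ∧ A ⊆ X ∧ ∀ Y ∈ S, Y ⊂ X → ¬ A ⊆ Y

/-- `A` is the label `m_S(X)`: the least admissible label for `X` within `S`. -/
def IsMinLabel [Preorder α] (M : Matroid α) (S : Set (Set α)) (X A : Set α) : Prop :=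
  GoodLabel M S X A ∧ ∀ A', GoodLabel M S X A' → atomLE A A'

/-- `NLListing M N R L` : `L` is the NL-listing of the remaining family `R`
(labels computed with respect to the whole family `N`), obtained by repeatedly
plucking the inclusion-minimal member with least label. -/
inductive NLListing [Preorder α] (M : Matroid α) (N : Set (Set α)) :
    Set (Set α) → List (Set α × Set α) → Prop
  | nil : NLListing M N ∅ []
  | cons {R : Set (Set α)} {X A : Set α} {L : List (Set α × Set α)} :
      X ∈ R →
      (∀ Y ∈ R, Y ⊆ X → Y = X) →
      IsMinLabel M N X A →
      (∀ Y ∈ R, (∀ W ∈ R, W ⊆ Y → W = Y) → ∀ A', IsMinLabel M N Y A' → atomLE A A') →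
      NLListing M N (R \ {X}) L →
      NLListing M N R ((X, A) :: L)

/-- A descent of a list of atoms at position `i`. -/
def HasDescentAt [Preorder α] (L : List (Set α)) (i : ℕ) : Prop :=
  ∃ h : i + 1 < L.length, atomLT (L.get ⟨i + 1, h⟩) (L.get ⟨i, Nat.lt_of_succ_lt h⟩)

/-- The indicator vector of a set. -/
noncomputable def indVec (X : Set α) : α → ℝ := X.indicator 1

/-- `v` is the vertex of the nested set `N` for the weight vector `c`. -/
def IsVertex (M : Matroid α) (B : Set (Set α)) (c : Set α → ℝ) (N : Set (Set α))
    (v : α → ℝ) : Prop :=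
  (∀ X ∈ N, ∑ᶠ a ∈ X, v a = c X) ∧
  ∃ lam mu : Set α → ℝ,
    (∀ X ∈ N \ maxB B, 0 < lam X) ∧
    v = (∑ᶠ X ∈ N \ maxB B, lam X • indVec X) + ∑ᶠ Y ∈ maxB B, mu Y • indVec Y

/-- `c` is cubical: every nested set has a unique vertex. -/
def IsCubical (M : Matroid α) (B : Set (Set α)) (c : Set α → ℝ) : Prop :=
  ∀ N, IsNested M B N → ∃! v, IsVertex M B c N v

/-- Lexicographic comparison of vectors in `ℝ^E`. -/
def lexLt [LinearOrder α] (u v : α → ℝ) : Prop :=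
  ∃ i, u i < v i ∧ ∀ j, j < i → u j = v j

open Classical in
/-- The map `τ_Z`. -/
noncomputable def tau (M : Matroid α) (Z X : Set α) : Set α :=
  if X ⊆ Z then X else M.closure (X ∪ Z) \ Z

/-- `MZ` is the contraction `M ／ Z`. -/
def IsContraction (M MZ : Matroid α) (Z : Set α) : Prop :=
  MZ.E = M.E \ Z ∧
  ∀ I : Set α, MZ.Indep I ↔ I ⊆ M.E \ Z ∧ ∃ J, M.IsBasis J Z ∧ M.Indep (I ∪ J)

set_option linter.unusedSectionVars false
set_option linter.unusedVariables false

section Rank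
variable [Finite α] {M : Matroid α} {I J S T X Y : Set α} {e f : α}

lemma mrank_bdd (M : Matroid α) (X : Set α) :
    BddAbove {n : ℕ | ∃ I ⊆ X, M.Indep I ∧ I.ncard = n} := by
  refine ⟨Nat.card α, ?_⟩
  rintro n ⟨I, -, -, rfl⟩
  simpa [Set.ncard_univ] using Set.ncard_le_ncard (subset_univ I) finite_univ

lemma mrank_set_nonempty (M : Matroid α) (X : Set α) :
    {n : ℕ | ∃ I ⊆ X, M.Indep I ∧ I.ncard = n}.Nonempty :=
  ⟨0, ∅, empty_subset _, M.empty_indep, by simp⟩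

lemma le_mrank (hI : M.Indep I) (hIX : I ⊆ X) : I.ncard ≤ mrank M X :=
  le_csSup (mrank_bdd M X) ⟨I, hIX, hI, rfl⟩

lemma Matroid.IsBasis'.mrank_eq (hI : M.IsBasis' I X) : mrank M X = I.ncard := by
  refine le_antisymm (csSup_le (mrank_set_nonempty M X) ?_) (le_mrank hI.indep hI.subset)
  rintro n ⟨J, hJX, hJ, rfl⟩
  by_contra hlt
  push_neg at hlt
  obtain ⟨e, heJI, heind⟩ := hI.indep.augment hJ (by
    rwa [← (I.toFinite).cast_ncard_eq, ← (J.toFinite).cast_ncard_eq, Nat.cast_lt])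
  exact hI.insert_not_indep ⟨hJX heJI.1, heJI.2⟩ heind

lemma mrank_mono (M : Matroid α) (h : X ⊆ Y) : mrank M X ≤ mrank M Y := by
  obtain ⟨I, hI⟩ := M.exists_isBasis' X
  rw [hI.mrank_eq]
  exact le_mrank hI.indep (hI.subset.trans h)

lemma Matroid.Indep.mrank_self (hI : M.Indep I) : mrank M I = I.ncard :=
  hI.isBasis_self.isBasis'.mrank_eq

lemma mrank_empty (M : Matroid α) : mrank M (∅ : Set α) = 0 := by
  simpa using M.empty_indep.mrank_self

lemma mrank_closure_eq (M : Matroid α) (X : Set α) : mrank M (M.closure X) = mrank M X := by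
  obtain ⟨I, hI⟩ := M.exists_isBasis' X
  rw [hI.mrank_eq, hI.isBasis_closure_right.isBasis'.mrank_eq]

lemma subset_closure_of_mrank_le (hST : S ⊆ T) (hTE : T ⊆ M.E)
    (hr : mrank M T ≤ mrank M S) : T ⊆ M.closure S := by
  obtain ⟨I, hI⟩ := M.exists_isBasis' S
  obtain ⟨J, hJ, hIJ⟩ := hI.indep.subset_isBasis'_of_subset (hI.subset.trans hST)
  have hJI : J = I := by
    refine (Set.eq_of_subset_of_ncard_le hIJ ?_).symm
    rw [← hI.mrank_eq, ← hJ.mrank_eq]; exact hr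
  have := (hJ.isBasis hTE).subset_closure
  rw [hJI] at this
  exact this.trans (M.closure_subset_closure_of_subset_closure
    (hI.subset.trans (M.subset_closure S (hST.trans hTE))))

lemma mrank_submod (M : Matroid α) (S T : Set α) :
    mrank M (S ∪ T) + mrank M (S ∩ T) ≤ mrank M S + mrank M T := by
  obtain ⟨I, hI⟩ := M.exists_isBasis' (S ∩ T)
  obtain ⟨J, hJ, hIJ⟩ := hI.indep.subset_isBasis'_of_subset
    (hI.subset.trans (inter_subset_left.trans subset_union_left))
  have hJint : J ∩ (S ∩ T) = I := hI.inter_eq_of_subset_indep hIJ hJ.indep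
  have h1 : (J ∩ S).ncard ≤ mrank M S := le_mrank (hJ.indep.subset inter_subset_left)
    inter_subset_right
  have h2 : (J ∩ T).ncard ≤ mrank M T := le_mrank (hJ.indep.subset inter_subset_left)
    inter_subset_right
  have hcard : (J ∩ S).ncard + (J ∩ T).ncard = J.ncard + I.ncard := by
    rw [← Set.ncard_inter_add_ncard_union (J ∩ S) (J ∩ T)]
    have e1 : J ∩ S ∩ (J ∩ T) = I := by rw [← hJint]; ext x; simp; tauto
    have e2 : J ∩ S ∪ J ∩ T = J := by
      rw [← inter_union_distrib_left, inter_eq_self_of_subset_left hJ.subset]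
    rw [e1, e2, add_comm]
  rw [hJ.mrank_eq, hI.mrank_eq]
  omega

lemma mrank_union_le (M : Matroid α) (S T : Set α) :
    mrank M (S ∪ T) ≤ mrank M S + mrank M T :=
  le_trans (Nat.le_add_right _ _) (mrank_submod M S T)

end Rank

/-- A separator of (the restriction to) `W`. -/
def MSep (M : Matroid α) (W P : Set α) : Prop :=
  P ⊆ W ∧ mrank M P + mrank M (W \ P) = mrank M W

section Sep
variable [Finite α] {M : Matroid α} {W P Q : Set α} {e f : α}

lemma mrank_le_sep (hP : P ⊆ W) : mrank M W ≤ mrank M P + mrank M (W \ P) := by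
  have : W = P ∪ (W \ P) := (union_diff_cancel hP).symm
  calc mrank M W = mrank M (P ∪ (W \ P)) := by rw [← this]
    _ ≤ _ := mrank_union_le M _ _

lemma msep_self (M : Matroid α) (W : Set α) : MSep M W W :=
  ⟨subset_rfl, by simp [mrank_empty]⟩

lemma MSep.inter (hP : MSep M W P) (hQ : MSep M W Q) : MSep M W (P ∩ Q) := by
  obtain ⟨hPW, hPr⟩ := hP
  obtain ⟨hQW, hQr⟩ := hQ
  refine ⟨inter_subset_left.trans hPW, le_antisymm ?_ (mrank_le_sep (inter_subset_left.trans hPW))⟩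
  have h1 : mrank M (W \ (P ∩ Q)) + mrank M (W \ (P ∪ Q))
      ≤ mrank M (W \ P) + mrank M (W \ Q) := by
    have e1 : W \ (P ∩ Q) = (W \ P) ∪ (W \ Q) := by ext x; simp; tauto
    have e2 : W \ (P ∪ Q) = (W \ P) ∩ (W \ Q) := by ext x; simp; tauto
    rw [e1, e2]; exact mrank_submod M _ _
  have h2 : mrank M (P ∪ Q) + mrank M (P ∩ Q) ≤ mrank M P + mrank M Q := mrank_submod M P Q
  have h3 : mrank M W ≤ mrank M (P ∪ Q) + mrank M (W \ (P ∪ Q)) :=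
    mrank_le_sep (union_subset hPW hQW)
  omega

lemma MSep.not_mem_closure (hM : MLoopless M) (hWE : W ⊆ M.E) (hP : MSep M W P)
    (hfW : f ∈ W) (hfP : f ∉ P) (hfcl : f ∈ M.closure P) : False := by
  obtain ⟨hPW, hPr⟩ := hP
  have hrins : mrank M (insert f P) ≤ mrank M P := by
    have h1 : insert f P ⊆ M.closure P :=
      insert_subset hfcl (M.subset_closure P (hPW.trans hWE))
    simpa [mrank_closure_eq] using mrank_mono M h1
  have hsub := mrank_submod M (insert f P) (W \ P)
  have e1 : insert f P ∪ (W \ P) = W := by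
    apply Subset.antisymm
    · exact union_subset (insert_subset hfW hPW) diff_subset
    · intro x hx; by_cases hxP : x ∈ P
      · exact Or.inl (Or.inr hxP)
      · exact Or.inr ⟨hx, hxP⟩
  have e2 : insert f P ∩ (W \ P) = {f} := by
    ext x; simp only [mem_inter_iff, mem_insert_iff, mem_diff, mem_singleton_iff]
    constructor
    · rintro ⟨rfl | hxP, -, hxP'⟩; · rfl
      · exact absurd hxP hxP'
    · rintro rfl; exact ⟨Or.inl rfl, hfW, hfP⟩
  have e3 : mrank M {f} = 1 := by
    rw [(hM f (hWE hfW)).mrank_self, ncard_singleton]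
  rw [e1, e2, e3] at hsub
  omega

lemma msep_sInter (𝒮 : Set (Set α)) (hne : 𝒮.Nonempty) (h : ∀ P ∈ 𝒮, MSep M W P) :
    MSep M W (⋂₀ 𝒮) := by
  have hfin : 𝒮.Finite := Set.toFinite _
  revert hne h
  refine Set.Finite.induction_on _ hfin (fun hne _ => by simp at hne) ?_
  intro P T hPT hTfin ih hne h
  rcases T.eq_empty_or_nonempty with rfl | hTne
  · simpa using h P (mem_insert _ _)
  · rw [sInter_insert]
    exact (h P (mem_insert _ _)).inter (ih hTne (fun Q hQ => h Q (mem_insert_iff.2 (Or.inr hQ))))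

end Sep

lemma closure_flat' (M : Matroid α) (X : Set α) : M.IsFlat (M.closure X) := by
  rw [closure_def]
  have hne : Nonempty {F // F ∈ {F | M.IsFlat F ∧ X ∩ M.E ⊆ F}} :=
    ⟨⟨M.E, M.ground_isFlat, inter_subset_right⟩⟩
  rw [sInter_eq_iInter]
  exact Matroid.IsFlat.iInter (fun F => F.2.1)

lemma flat_of_closure_subset {M : Matroid α} {X : Set α} (hXE : X ⊆ M.E)
    (h : M.closure X ⊆ X) : M.IsFlat X := by
  have : M.closure X = X := h.antisymm (M.subset_closure X hXE)
  rw [← this]; exact closure_flat' M X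

section Contraction
variable [Finite α] {M MZ : Matroid α} {Z I J S : Set α} {e : α}

lemma IsContraction.indep_union (hC : IsContraction M MZ Z) (hZE : Z ⊆ M.E)
    (hI : MZ.Indep I) (hJ : M.IsBasis J Z) : M.Indep (I ∪ J) := by
  obtain ⟨hIE, J₂, hJ₂, hind₂⟩ := (hC.2 I).1 hI
  have hIZ : Disjoint I Z := disjoint_sdiff_left.mono_left hIE
  -- I ∪ J₂ is a basis' of I ∪ Z
  obtain ⟨L, hL, hJL⟩ := hJ.indep.subset_isBasis'_of_subset (hJ.subset.trans subset_union_right)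
  have hLZ : L ∩ Z = J := hJ.isBasis'.inter_eq_of_subset_indep hJL hL.indep
  -- L \ Z ⊆ I
  have hLZI : L \ Z ⊆ I := by
    intro x hx
    rcases hL.subset hx.1 with hxI | hxZ
    · exact hxI
    · exact absurd hxZ hx.2
  -- I ∪ J₂ is also a basis' of I ∪ Z
  obtain ⟨L₂, hL₂, hJL₂⟩ := hind₂.subset_isBasis'_of_subset (union_subset_union_right I hJ₂.subset)
  have hL₂Z : L₂ ∩ Z = J₂ := by
    refine (hJ₂.eq_of_subset_indep (hL₂.indep.subset inter_subset_left) ?_ inter_subset_right).symm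
    exact subset_inter (subset_union_right.trans hJL₂) hJ₂.subset
  have hL₂I : L₂ = I ∪ J₂ := by
    refine Subset.antisymm ?_ hJL₂
    intro x hx
    rcases hL₂.subset hx with hxI | hxZ
    · exact Or.inl hxI
    · exact Or.inr (by rw [← hL₂Z]; exact ⟨hx, hxZ⟩)
  -- cardinalities
  have hJJ₂ : J.ncard = J₂.ncard := by
    rw [← hJ.isBasis'.mrank_eq, ← hJ₂.isBasis'.mrank_eq]
  have hLcard : L.ncard = L₂.ncard := by
    rw [← hL.mrank_eq, ← hL₂.mrank_eq]
  have hIJ₂disj : Disjoint I J₂ := hIZ.mono_right hJ₂.subset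
  have hL₂card : L₂.ncard = I.ncard + J₂.ncard := by
    rw [hL₂I, ncard_union_eq hIJ₂disj]
  have hLdecomp : L = (L \ Z) ∪ J := by
    rw [← hLZ]; exact (Set.diff_union_inter L Z).symm
  have hLcard2 : L.ncard = (L \ Z).ncard + J.ncard := by
    conv_lhs => rw [hLdecomp]
    exact ncard_union_eq (disjoint_sdiff_left.mono_right hJ.subset)
  have hLZIcard : (L \ Z).ncard = I.ncard := by omega
  have hLZI' : L \ Z = I := Set.eq_of_subset_of_ncard_le hLZI (by omega)
  have : L = I ∪ J := by rw [hLdecomp, hLZI']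
  rw [← this]; exact hL.indep

lemma IsContraction.indep_iff (hC : IsContraction M MZ Z) (hZE : Z ⊆ M.E)
    (hJ : M.IsBasis J Z) : MZ.Indep I ↔ I ⊆ M.E \ Z ∧ M.Indep (I ∪ J) := by
  constructor
  · intro hI
    exact ⟨((hC.2 I).1 hI).1, hC.indep_union hZE hI hJ⟩
  · rintro ⟨hIE, hind⟩
    exact (hC.2 I).2 ⟨hIE, J, hJ, hind⟩

lemma IsContraction.loopless (hC : IsContraction M MZ Z) (hZ : M.IsFlat Z) :
    MLoopless MZ := by
  intro e he
  obtain ⟨J, hJ⟩ := M.exists_isBasis Z hZ.subset_ground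
  rw [hC.1] at he
  refine (hC.indep_iff hZ.subset_ground hJ).2 ⟨singleton_subset_iff.2 he, ?_⟩
  have hecl : e ∉ M.closure J := by
    rw [hJ.closure_eq_closure, hZ.closure]; exact he.2
  rw [singleton_union]
  exact (hJ.indep.insert_indep_iff.2 (Or.inl ⟨he.1, hecl⟩))

lemma IsContraction.closure_eq (hC : IsContraction M MZ Z) (hZ : M.IsFlat Z)
    (hS : S ⊆ M.E \ Z) : MZ.closure S = M.closure (S ∪ Z) \ Z := by
  obtain ⟨J, hJ⟩ := M.exists_isBasis Z hZ.subset_ground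
  obtain ⟨I', hI'⟩ := MZ.exists_isBasis' S
  have hI'S : I' ⊆ S := hI'.subset
  have hI'E : I' ⊆ M.E \ Z := hI'S.trans hS
  have hK : M.Indep (I' ∪ J) := hC.indep_union hZ.subset_ground hI'.indep hJ
  set K := I' ∪ J with hKdef
  have hKE : K ⊆ M.E := hK.subset_ground
  -- M.closure (S ∪ Z) = M.closure K
  have hclSZ : M.closure (S ∪ Z) = M.closure K := by
    refine Subset.antisymm ?_ (M.closure_subset_closure (union_subset_union hI'S hJ.subset))
    refine M.closure_subset_closure_of_subset_closure ?_
    rintro x (hxS | hxZ)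
    · by_cases hxI' : x ∈ I'
      · exact M.subset_closure K hKE (Or.inl hxI')
      · have hnind : ¬ MZ.Indep (insert x I') := hI'.insert_not_indep ⟨hxS, hxI'⟩
        have hnind' : ¬ M.Indep (insert x K) := by
          intro hind
          refine hnind ((hC.indep_iff hZ.subset_ground hJ).2
            ⟨insert_subset (hS hxS) hI'E, ?_⟩)
          rw [insert_union]
          exact hind
        by_contra hxcl
        exact hnind' (hK.insert_indep_iff.2 (Or.inl ⟨(hS hxS).1, hxcl⟩))
    · exact (M.closure_subset_closure subset_union_right) (hJ.subset_closure hxZ)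
  have hkey : MZ.closure I' = M.closure K \ Z := by
    apply Subset.antisymm
    · intro x hx
      have hxE : x ∈ MZ.E := MZ.closure_subset_ground I' hx
      rw [hC.1] at hxE
      refine ⟨?_, hxE.2⟩
      rcases hI'.indep.mem_closure_iff.1 hx with hdep | hxI'
      · have hnind : ¬ M.Indep (insert x K) := by
          intro hind
          refine hdep.not_indep ((hC.indep_iff hZ.subset_ground hJ).2
            ⟨insert_subset hxE hI'E, ?_⟩)
          rw [insert_union]
          exact hind
        by_contra hxcl
        exact hnind (hK.insert_indep_iff.2 (Or.inl ⟨hxE.1, hxcl⟩))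
      · exact M.subset_closure K hKE (Or.inl hxI')
    · rintro x ⟨hxcl, hxZ⟩
      have hxE : x ∈ M.E := M.closure_subset_ground _ hxcl
      by_cases hxI' : x ∈ I'
      · exact MZ.subset_closure I' (hI'E.trans_eq hC.1.symm) hxI'
      · have hxK : x ∉ K := by
          rintro (h | h)
          · exact hxI' h
          · exact hxZ (hJ.subset h)
        have hnind : ¬ M.Indep (insert x K) := by
          intro hind
          rw [hK.insert_indep_iff_of_notMem hxK] at hind
          exact hind.2 hxcl
        have hnind' : ¬ MZ.Indep (insert x I') := by
          intro hind
          have := (hC.indep_iff hZ.subset_ground hJ).1 hind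
          rw [insert_union] at this
          exact hnind this.2
        rw [hI'.indep.mem_closure_iff]
        exact Or.inl ⟨hnind', insert_subset (hC.1 ▸ ⟨hxE, hxZ⟩)
          (hI'E.trans_eq hC.1.symm)⟩
  rw [← hI'.closure_eq_closure, hkey, hclSZ]

end Contraction

section Key
variable [Finite α] {M : Matroid α} {W C P Q S : Set α} {e : α}

lemma mrank_restrict (hSC : S ⊆ C) : mrank (M.restrict C) S = mrank M S := by
  unfold mrank
  congr 1
  ext n
  constructor
  · rintro ⟨I, hIS, hI, rfl⟩
    exact ⟨I, hIS, (restrict_indep_iff.1 hI).1, rfl⟩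
  · rintro ⟨I, hIS, hI, rfl⟩
    exact ⟨I, hIS, restrict_indep_iff.2 ⟨hI, hIS.trans hSC⟩, rfl⟩

lemma msep_of_split (hC : MSep M W C) (hPQ : P ∪ Q = C) (hdisj : Disjoint P Q)
    (hr : mrank M P + mrank M Q = mrank M C) : MSep M W P := by
  obtain ⟨hCW, hCr⟩ := hC
  have hPC : P ⊆ C := hPQ ▸ subset_union_left
  have hQC : Q ⊆ C := hPQ ▸ subset_union_right
  have hWP : W \ P = Q ∪ (W \ C) := by
    ext x
    simp only [mem_diff, mem_union]
    constructor
    · rintro ⟨hxW, hxP⟩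
      by_cases hxC : x ∈ C
      · rw [← hPQ] at hxC
        rcases hxC with h | h
        · exact absurd h hxP
        · exact Or.inl h
      · exact Or.inr ⟨hxW, hxC⟩
    · rintro (hxQ | ⟨hxW, hxC⟩)
      · exact ⟨hCW (hQC hxQ), fun hxP => hdisj.ne_of_mem hxP hxQ rfl⟩
      · exact ⟨hxW, fun h => hxC (hPC h)⟩
  have h1 : mrank M (W \ P) ≤ mrank M Q + mrank M (W \ C) := by
    rw [hWP]; exact mrank_union_le M _ _
  have h2 : mrank M W ≤ mrank M P + mrank M (W \ P) := mrank_le_sep (hPC.trans hCW)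
  exact ⟨hPC.trans hCW, by omega⟩

lemma key_lemma [Finite α] (M : Matroid α) (hM : MLoopless M)
    (B : Set (Set α)) (hB : IsBuildingSet M B)
    (X Z : Set α) (hX : X ∈ B) (hZ : Z ∈ B)
    (hnest : IsNested M B ({X, Z} ∪ maxB B))
    (hXZ : ¬ X ⊆ Z) : M.closure (X ∪ Z) \ Z ⊆ X := by
  obtain ⟨hXflat, hXne⟩ := hB.1 X hX
  obtain ⟨hZflat, hZne⟩ := hB.1 Z hZ
  have hXE : X ⊆ M.E := hXflat.subset_ground
  have hZE : Z ⊆ M.E := hZflat.subset_ground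
  by_cases hZX : Z ⊆ X
  · rw [union_eq_self_of_subset_right hZX, hXflat.closure]
    exact diff_subset
  -- X and Z are incomparable
  have hne : X ≠ Z := fun h => hZX (h ▸ subset_rfl)
  have hWnB : M.closure (X ∪ Z) ∉ B := by
    have hpair : ({X, Z} : Set (Set α)) ⊆ {X, Z} ∪ maxB B := subset_union_left
    have hnontriv : ({X, Z} : Set (Set α)).Nontrivial :=
      ⟨X, Or.inl rfl, Z, Or.inr rfl, hne⟩
    have hpw : ({X, Z} : Set (Set α)).Pairwise Incomp := by
      intro a ha b hb hab
      rcases ha with rfl | ha <;> rcases hb with rfl | hb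
      · exact absurd rfl hab
      · rw [mem_singleton_iff] at hb; subst hb; exact ⟨hXZ, hZX⟩
      · rw [mem_singleton_iff] at ha; subst ha; exact ⟨hZX, hXZ⟩
      · rw [mem_singleton_iff] at ha hb; subst ha; subst hb; exact absurd rfl hab
    have := hnest.2.2 {X, Z} hpair hnontriv hpw
    rwa [sUnion_pair] at this
  have hXZdisj : X ∩ Z = ∅ := by
    by_contra hint
    exact hWnB (hB.2.2 X hX Z hZ (nonempty_iff_ne_empty.2 hint))
  set W := M.closure (X ∪ Z) with hWdef
  have hWE : W ⊆ M.E := M.closure_subset_ground _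
  have hWflat : M.IsFlat W := closure_flat' M _
  have hXW : X ⊆ W := subset_union_left.trans (M.subset_closure _ (union_subset hXE hZE))
  have hZW : Z ⊆ W := subset_union_right.trans (M.subset_closure _ (union_subset hXE hZE))
  have hXZW : X ∪ Z ⊆ W := union_subset hXW hZW
  rintro e ⟨heW, heZ⟩
  by_contra heX
  have heE : e ∈ M.E := hWE heW
  -- the component of e
  set 𝒮 := {P | MSep M W P ∧ e ∈ P} with h𝒮def
  have hW𝒮 : W ∈ 𝒮 := ⟨msep_self M W, heW⟩
  set C := ⋂₀ 𝒮 with hCdef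
  have hCsep : MSep M W C := msep_sInter 𝒮 ⟨W, hW𝒮⟩ (fun P hP => hP.1)
  have heC : e ∈ C := fun P hP => hP.2
  have hCmin : ∀ P, MSep M W P → e ∈ P → C ⊆ P := fun P h1 h2 => sInter_subset_of_mem ⟨h1, h2⟩
  have hCW : C ⊆ W := hCsep.1
  have hCE : C ⊆ M.E := hCW.trans hWE
  -- C is a flat
  have hCflat : M.IsFlat C := by
    refine flat_of_closure_subset hCE ?_
    intro x hx
    have hxW : x ∈ W := by
      have := M.closure_subset_closure hCW
      rw [hWdef, closure_closure] at this
      exact this hx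
    by_contra hxC
    exact hCsep.not_mem_closure hM hWE hxW hxC hx
  -- C is connected
  have hCconn : MConnected (M.restrict C) := by
    intro P Q hPQ hdisj hPne hQne hr
    rw [restrict_ground_eq] at hPQ
    have hPC : P ⊆ C := hPQ ▸ subset_union_left
    have hQC : Q ⊆ C := hPQ ▸ subset_union_right
    rw [mrank_restrict hPC, mrank_restrict hQC, restrict_ground_eq,
      mrank_restrict (subset_refl C)] at hr
    rcases (hPQ ▸ heC : e ∈ P ∪ Q) with heP | heQ
    · have := hCmin P (msep_of_split hCsep hPQ hdisj hr) heP
      obtain ⟨q, hq⟩ := hQne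
      exact hdisj.ne_of_mem (this (hQC hq)) hq rfl
    · have := hCmin Q (msep_of_split hCsep (by rwa [union_comm]) hdisj.symm (by omega)) heQ
      obtain ⟨p, hp⟩ := hPne
      exact hdisj.ne_of_mem hp (this (hPC hp)) rfl
  have hCB : C ∈ B := hB.2.1 C hCflat ⟨e, heC⟩ hCconn
  -- rank equality
  have hrW : mrank M W = mrank M (X ∪ Z) := mrank_closure_eq M _
  have hrsplit : mrank M ((X ∪ Z) ∩ C) = mrank M C := by
    have h1 : mrank M (X ∪ Z) ≤ mrank M ((X ∪ Z) ∩ C) + mrank M ((X ∪ Z) \ C) := by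
      calc mrank M (X ∪ Z) = mrank M (((X ∪ Z) ∩ C) ∪ ((X ∪ Z) \ C)) := by
            rw [inter_union_diff]
        _ ≤ _ := mrank_union_le M _ _
    have h2 : mrank M ((X ∪ Z) ∩ C) ≤ mrank M C := mrank_mono M inter_subset_right
    have h3 : mrank M ((X ∪ Z) \ C) ≤ mrank M (W \ C) :=
      mrank_mono M (diff_subset_diff_left hXZW)
    have h4 := hCsep.2
    omega
  have hCsub : C ⊆ M.closure ((X ∪ Z) ∩ C) :=
    subset_closure_of_mrank_le inter_subset_right hCE (le_of_eq hrsplit.symm)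
  by_cases hCZ : (C ∩ Z).Nonempty
  · by_cases hCX : (C ∩ X).Nonempty
    · -- both: W ∈ B, contradiction
      have hD : M.closure (X ∪ C) ∈ B := hB.2.2 X hX C hCB (by
        obtain ⟨c, hc⟩ := hCX; exact ⟨c, hc.2, hc.1⟩)
      have hCD : C ⊆ M.closure (X ∪ C) :=
        subset_union_right.trans (M.subset_closure _ (union_subset hXE hCE))
      have hDZ : (M.closure (X ∪ C) ∩ Z).Nonempty := by
        obtain ⟨c, hc⟩ := hCZ
        exact ⟨c, hCD hc.1, hc.2⟩
      have hfinal := hB.2.2 _ hD Z hZ hDZ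
      have : M.closure (M.closure (X ∪ C) ∪ Z) = W := by
        rw [closure_union_closure_left_eq]
        refine Subset.antisymm ?_ (M.closure_subset_closure (fun x hx => by
          rcases hx with h | h
          · exact Or.inl (Or.inl h)
          · exact Or.inr h))
        have : X ∪ C ∪ Z ⊆ W := union_subset (union_subset hXW hCW) hZW
        calc M.closure (X ∪ C ∪ Z) ⊆ M.closure W := M.closure_subset_closure this
          _ = W := hWflat.closure
      rw [this] at hfinal
      exact hWnB hfinal
    · -- C ∩ X = ∅ : C ⊆ Z
      have hint : (X ∪ Z) ∩ C = Z ∩ C := by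
        rw [union_inter_distrib_right]
        rw [not_nonempty_iff_eq_empty] at hCX
        rw [inter_comm C X] at hCX
        rw [hCX, empty_union]
      have : C ⊆ Z := by
        refine hCsub.trans ?_
        rw [hint]
        calc M.closure (Z ∩ C) ⊆ M.closure Z := M.closure_subset_closure inter_subset_left
          _ = Z := hZflat.closure
      exact heZ (this heC)
  · -- C ∩ Z = ∅ : C ⊆ X
    have hint : (X ∪ Z) ∩ C = X ∩ C := by
      rw [union_inter_distrib_right]
      rw [not_nonempty_iff_eq_empty] at hCZ
      rw [inter_comm C Z] at hCZ
      rw [hCZ, union_empty]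
    have : C ⊆ X := by
      refine hCsub.trans ?_
      rw [hint]
      calc M.closure (X ∩ C) ⊆ M.closure X := M.closure_subset_closure inter_subset_left
        _ = X := hXflat.closure
    exact heX (this heC)

end Key

theorem contraction_atoms_below' [Finite α]
    (M MZ : Matroid α) (hM : MLoopless M)
    (B : Set (Set α)) (hB : IsBuildingSet M B)
    (X Z : Set α) (hX : X ∈ B) (hZ : Z ∈ B)
    (hnest : IsNested M B ({X, Z} ∪ maxB B))
    (hXZ : ¬ X ⊆ Z)
    (hMZ : IsContraction M MZ Z) :
    ∀ A' : Set α,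
      (IsAtomFlat MZ A' ∧ A' ⊆ M.closure (X ∪ Z) \ Z) ↔
      (∃ A, IsAtomFlat M A ∧ A ⊆ X ∧ ¬ A ⊆ Z ∧ A' = M.closure (A ∪ Z) \ Z) := by
  intro A'
  obtain ⟨hXflat, hXne⟩ := hB.1 X hX
  obtain ⟨hZflat, hZne⟩ := hB.1 Z hZ
  have hXE : X ⊆ M.E := hXflat.subset_ground
  have hZE : Z ⊆ M.E := hZflat.subset_ground
  have hkey := key_lemma M hM B hB X Z hX hZ hnest hXZ
  constructor
  · rintro ⟨⟨hA'flat, hA'rank⟩, hA'sub⟩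
    obtain ⟨I', hI'⟩ := MZ.exists_isBasis' A'
    have hI'card : I'.ncard = 1 := hI'.mrank_eq.symm.trans hA'rank
    obtain ⟨e, rfl⟩ := ncard_eq_one.1 hI'card
    have heA' : e ∈ A' := hI'.subset rfl
    have heMZ : e ∈ MZ.E := hI'.indep.subset_ground rfl
    have heEZ : e ∈ M.E \ Z := hMZ.1 ▸ heMZ
    have hA'eq : A' = M.closure ({e} ∪ Z) \ Z := by
      have h1 : MZ.closure {e} = MZ.closure A' := hI'.closure_eq_closure
      rw [hA'flat.closure] at h1
      rw [← h1, hMZ.closure_eq hZflat (singleton_subset_iff.2 heEZ)]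
    have heX : e ∈ X := hkey (hA'sub heA')
    refine ⟨M.closure {e}, ⟨closure_flat' M _, ?_⟩, ?_, ?_, ?_⟩
    · rw [mrank_closure_eq, (hM e heEZ.1).mrank_self, ncard_singleton]
    · calc M.closure {e} ⊆ M.closure X :=
            M.closure_subset_closure (singleton_subset_iff.2 heX)
        _ = X := hXflat.closure
    · intro h
      exact heEZ.2 (h (M.subset_closure {e} (singleton_subset_iff.2 heEZ.1) rfl))
    · rw [closure_union_closure_left_eq]
      exact hA'eq
  · rintro ⟨A, ⟨hAflat, hArank⟩, hAX, hAZ, rfl⟩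
    obtain ⟨e, heA, heZ⟩ := not_subset.1 hAZ
    have heE : e ∈ M.E := hAflat.subset_ground heA
    have heind : M.Indep {e} := hM e heE
    have hecl : e ∈ M.closure {e} := M.subset_closure {e} (singleton_subset_iff.2 heE) rfl
    have hAcl : A = M.closure {e} := by
      refine Subset.antisymm ?_
        (by rw [← hAflat.closure]
            exact M.closure_subset_closure (singleton_subset_iff.2 heA))
      intro a haA
      by_contra hacl
      have haE : a ∈ M.E := hAflat.subset_ground haA
      have hane : a ∉ ({e} : Set α) := fun h => hacl (h ▸ hecl)
      have hins : M.Indep (insert a {e}) := heind.insert_indep_iff.2 (Or.inl ⟨haE, hacl⟩)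
      have h2 : (insert a ({e} : Set α)).ncard = 2 := by
        rw [ncard_insert_of_notMem hane, ncard_singleton]
      have hle := le_mrank hins (insert_subset haA (singleton_subset_iff.2 heA))
      omega
    have hA'eq : M.closure (A ∪ Z) = M.closure ({e} ∪ Z) := by
      rw [hAcl, closure_union_closure_left_eq]
    have heEZ : e ∈ M.E \ Z := ⟨heE, heZ⟩
    have hclZ : MZ.closure {e} = M.closure ({e} ∪ Z) \ Z :=
      hMZ.closure_eq hZflat (singleton_subset_iff.2 heEZ)
    have heindMZ : MZ.Indep {e} := hMZ.loopless hZflat e (hMZ.1 ▸ heEZ)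
    refine ⟨⟨?_, ?_⟩, ?_⟩
    · rw [hA'eq, ← hclZ]
      exact closure_flat' MZ _
    · rw [hA'eq, ← hclZ, mrank_closure_eq, heindMZ.mrank_self, ncard_singleton]
    · exact diff_subset_diff_left (M.closure_subset_closure (union_subset_union_left _ hAX))


/-- the atoms of the contraction `M/Z` contained in `(X ∨ Z) ∖ Z` are
exactly the sets `(A ∨ Z) ∖ Z` for atoms `A` of `M` with `A ⊆ X` and `A ⊄ Z`. -/
theorem contraction_atoms_below {α : Type*} [Fintype α] [LinearOrder α]
    (M MZ : Matroid α) (hM : MLoopless M)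
    (B : Set (Set α)) (hB : IsBuildingSet M B)
    (X Z : Set α) (hX : X ∈ B) (hZ : Z ∈ B)
    (hnest : IsNested M B ({X, Z} ∪ maxB B))
    (hXZ : ¬ X ⊆ Z)
    (hMZ : IsContraction M MZ Z) :
    ∀ A' : Set α,
      (IsAtomFlat MZ A' ∧ A' ⊆ M.closure (X ∪ Z) \ Z) ↔
      (∃ A, IsAtomFlat M A ∧ A ⊆ X ∧ ¬ A ⊆ Z ∧ A' = M.closure (A ∪ Z) \ Z) :=
  contraction_atoms_below' M MZ hM B hB X Z hX hZ hnest hXZ hMZ
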